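/- arXiv:2605.15787 — 8 statements merged into one kernel-verified Lean document; each statement's English description precedes it below -/
import Mathlib

section
/- Let E be a real inner product space, T ≥ 2, and let a, a' : Fin T → ℝ be nonnegative score vectors with a_j = a'_j for all j ≠ j₀, Z = Σ_j a_j > 0, Z' = Σ_j a'_j > 0, α_j = a_j / Z, α'_j = a'_j / Z'. Let v, v' : Fin T → E be value vectors with v_j = v'_j for all j ≠ j₀, and define the pooled representations h = Σ_j α_j v_j and h' = Σ_j α'_j v'_j. Assume α'_{j₀} < 1 and define the distractor centroid c̄ = (1 / (1 − α'_{j₀})) · Σ_{j ≠ j₀} α'_j v_j. Then h − h' = α_{j₀} · (v_{j₀} − c̄) − α'_{j₀} · (v'_{j₀} − c̄). -/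
/-- closed-form difference of attention-pooled representations for two
sequences differing only at position `j₀`, expressed via the distractor centroid. -/
theorem pooled_representation_difference
    {E : Type*} [NormedAddCommGroup E] [InnerProductSpace ℝ E]
    (T : ℕ) (hT : 2 ≤ T) (j₀ : Fin T) (a a' : Fin T → ℝ)
    (ha : ∀ j, 0 ≤ a j) (ha' : ∀ j, 0 ≤ a' j)
    (hagree : ∀ j, j ≠ j₀ → a j = a' j)
    (Z Z' : ℝ) (hZdef : Z = ∑ j, a j) (hZ'def : Z' = ∑ j, a' j)
    (hZ : 0 < Z) (hZ' : 0 < Z')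
    (α α' : Fin T → ℝ)
    (hα : ∀ j, α j = a j / Z) (hα' : ∀ j, α' j = a' j / Z')
    (v v' : Fin T → E) (hv : ∀ j, j ≠ j₀ → v j = v' j)
    (h h' : E)
    (hh : h = ∑ j, α j • v j) (hh' : h' = ∑ j, α' j • v' j)
    (hlt : α' j₀ < 1)
    (cbar : E) (hc : cbar = (1 / (1 - α' j₀)) • ∑ j ∈ Finset.univ.erase j₀, α' j • v j) :
    h - h' = α j₀ • (v j₀ - cbar) - α' j₀ • (v' j₀ - cbar) := by
  have hmem : j₀ ∈ (Finset.univ : Finset (Fin T)) := Finset.mem_univ _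
  have hne : (1 : ℝ) - α' j₀ ≠ 0 := by linarith
  set S : E := ∑ j ∈ Finset.univ.erase j₀, α' j • v j with hS
  -- sums of α and α' are 1
  have hsumα : ∑ j, α j = 1 := by
    simp only [hα, ← Finset.sum_div, ← hZdef]
    field_simp
  have hsumα' : ∑ j, α' j = 1 := by
    simp only [hα', ← Finset.sum_div, ← hZ'def]
    field_simp
  have herase : ∑ j ∈ Finset.univ.erase j₀, α j = 1 - α j₀ := by
    have := (Finset.add_sum_erase _ α hmem)
    linarith [hsumα]
  have herase' : ∑ j ∈ Finset.univ.erase j₀, α' j = 1 - α' j₀ := by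
    have := (Finset.add_sum_erase _ α' hmem)
    linarith [hsumα']
  -- off-diagonal proportionality
  have hprop : ∀ j ∈ Finset.univ.erase j₀, α j = (Z' / Z) * α' j := by
    intro j hj
    have hjne : j ≠ j₀ := (Finset.mem_erase.mp hj).1
    rw [hα, hα', hagree j hjne]
    field_simp
  -- relation between α j₀ and α' j₀
  have hk : 1 - α j₀ = (Z' / Z) * (1 - α' j₀) := by
    rw [← herase, ← herase', Finset.mul_sum]
    exact Finset.sum_congr rfl hprop
  -- S = (1 - α' j₀) • cbar
  have hScbar : S = (1 - α' j₀) • cbar := by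
    rw [hc, smul_smul]
    field_simp
    rw [one_smul]
  have hh2 : h = α j₀ • v j₀ + (1 - α j₀) • cbar := by
    rw [hh, ← Finset.add_sum_erase _ _ hmem]
    congr 1
    have : ∑ j ∈ Finset.univ.erase j₀, α j • v j = (Z' / Z) • S := by
      rw [hS, Finset.smul_sum]
      refine Finset.sum_congr rfl fun j hj => ?_
      rw [hprop j hj, smul_smul]
    rw [this, hScbar, smul_smul, ← hk]
  have hh'2 : h' = α' j₀ • v' j₀ + (1 - α' j₀) • cbar := by
    rw [hh', ← Finset.add_sum_erase _ _ hmem]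
    congr 1
    rw [← hScbar, hS]
    refine Finset.sum_congr rfl fun j hj => ?_
    rw [hv j (Finset.mem_erase.mp hj).1]
  rw [hh2, hh'2]
  simp only [smul_sub, sub_smul, one_smul]
  abel
end

section
/- Let E be a real inner product space, T ≥ 2, and let a, a' : Fin T → ℝ be nonnegative score vectors with a_j = a'_j for all j ≠ j₀, Z = Σ_j a_j > 0, Z' = Σ_j a'_j > 0, α_j = a_j / Z, α'_j = a'_j / Z'. Let v, v' : Fin T → E with v_j = v'_j for all j ≠ j₀, h = Σ_j α_j v_j, h' = Σ_j α'_j v'_j, α'_{j₀} < 1, and c̄ = (1 / (1 − α'_{j₀})) · Σ_{j ≠ j₀} α'_j v_j. If Δ ≥ ‖v_{j₀} − c̄‖ and Δ ≥ ‖v'_{j₀} − c̄‖, then ‖h − h'‖ ≤ (α_{j₀} + α'_{j₀}) · Δ. -/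
/-- upper bound (necessity direction) — the distance between pooled
representations of two sequences differing only at `j₀` is bottlenecked by the
attention mass at `j₀` times the Feature Separability Margin `Δ`. -/
theorem pooled_representation_upper_bound
    {E : Type*} [NormedAddCommGroup E] [InnerProductSpace ℝ E]
    (T : ℕ) (hT : 2 ≤ T) (j₀ : Fin T) (a a' : Fin T → ℝ)
    (ha : ∀ j, 0 ≤ a j) (ha' : ∀ j, 0 ≤ a' j)
    (hagree : ∀ j, j ≠ j₀ → a j = a' j)
    (Z Z' : ℝ) (hZdef : Z = ∑ j, a j) (hZ'def : Z' = ∑ j, a' j)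
    (hZ : 0 < Z) (hZ' : 0 < Z')
    (α α' : Fin T → ℝ)
    (hα : ∀ j, α j = a j / Z) (hα' : ∀ j, α' j = a' j / Z')
    (v v' : Fin T → E) (hv : ∀ j, j ≠ j₀ → v j = v' j)
    (h h' : E)
    (hh : h = ∑ j, α j • v j) (hh' : h' = ∑ j, α' j • v' j)
    (hlt : α' j₀ < 1)
    (cbar : E) (hc : cbar = (1 / (1 - α' j₀)) • ∑ j ∈ Finset.univ.erase j₀, α' j • v j)
    (Δ : ℝ) (hΔ : ‖v j₀ - cbar‖ ≤ Δ) (hΔ' : ‖v' j₀ - cbar‖ ≤ Δ) :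
    ‖h - h'‖ ≤ (α j₀ + α' j₀) * Δ := by
  classical
  set w : E := ∑ j ∈ Finset.univ.erase j₀, α' j • v j with hw
  have hS : Z - a j₀ = ∑ j ∈ Finset.univ.erase j₀, a j := by
    rw [hZdef, ← Finset.add_sum_erase _ _ (Finset.mem_univ j₀)]; ring
  have hS' : Z' - a' j₀ = ∑ j ∈ Finset.univ.erase j₀, a' j := by
    rw [hZ'def, ← Finset.add_sum_erase _ _ (Finset.mem_univ j₀)]; ring
  have hSS : Z - a j₀ = Z' - a' j₀ := by
    rw [hS, hS']
    exact Finset.sum_congr rfl fun j hj => hagree j (Finset.ne_of_mem_erase hj)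
  have h1' : 1 - α' j₀ = (Z' - a' j₀) / Z' := by rw [hα']; field_simp
  have h1 : 1 - α j₀ = (Z - a j₀) / Z := by rw [hα]; field_simp
  have hpos' : 0 < 1 - α' j₀ := by linarith
  have hSpos : 0 < Z' - a' j₀ := by
    by_contra hcon
    push_neg at hcon
    have h2 : (Z' - a' j₀) / Z' ≤ 0 := div_nonpos_of_nonpos_of_nonneg hcon hZ'.le
    rw [← h1'] at h2
    linarith
  have hne' : (1 : ℝ) - α' j₀ ≠ 0 := ne_of_gt hpos'
  have hr : ∀ j ∈ Finset.univ.erase j₀,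
      α j = ((1 - α j₀) / (1 - α' j₀)) * α' j := by
    intro j hj
    have hjne := Finset.ne_of_mem_erase hj
    have hx : (1 - α j₀) / (1 - α' j₀) = Z' / Z := by
      rw [h1, h1', hSS]
      field_simp
    rw [hx, hα j, hα' j, hagree j hjne]
    field_simp
  have hh2 : h = α j₀ • v j₀ + ((1 - α j₀) / (1 - α' j₀)) • w := by
    rw [hh, ← Finset.add_sum_erase _ _ (Finset.mem_univ j₀), hw, Finset.smul_sum]
    congr 1
    refine Finset.sum_congr rfl fun j hj => ?_
    rw [hr j hj, smul_smul]
  have hcb : (1 - α' j₀) • cbar = w := by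
    rw [hc, smul_smul]
    field_simp
    rw [one_smul]
  have hcb2 : ((1 - α j₀) / (1 - α' j₀)) • w = (1 - α j₀) • cbar := by
    rw [← hcb, smul_smul]
    congr 1
    field_simp
  have hh'2 : h' = α' j₀ • v' j₀ + (1 - α' j₀) • cbar := by
    rw [hh', ← Finset.add_sum_erase _ _ (Finset.mem_univ j₀), hcb, hw]
    congr 1
    exact Finset.sum_congr rfl fun j hj => by rw [hv j (Finset.ne_of_mem_erase hj)]
  have hkey : h - h' = α j₀ • (v j₀ - cbar) - α' j₀ • (v' j₀ - cbar) := by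
    rw [hh2, hh'2, hcb2]
    simp only [smul_sub, sub_smul, one_smul]
    abel
  have hα0 : 0 ≤ α j₀ := by rw [hα]; exact div_nonneg (ha j₀) hZ.le
  have hα0' : 0 ≤ α' j₀ := by rw [hα']; exact div_nonneg (ha' j₀) hZ'.le
  calc ‖h - h'‖ ≤ ‖α j₀ • (v j₀ - cbar)‖ + ‖α' j₀ • (v' j₀ - cbar)‖ := by
        rw [hkey]; exact norm_sub_le _ _
    _ = α j₀ * ‖v j₀ - cbar‖ + α' j₀ * ‖v' j₀ - cbar‖ := by
        rw [norm_smul, norm_smul, Real.norm_eq_abs, Real.norm_eq_abs,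
          abs_of_nonneg hα0, abs_of_nonneg hα0']
    _ ≤ (α j₀ + α' j₀) * Δ := by nlinarith
end

section
/- Let E be a real inner product space, T ≥ 2, and let a, a' : Fin T → ℝ be nonnegative score vectors with a_j = a'_j for all j ≠ j₀, Z = Σ_j a_j > 0, Z' = Σ_j a'_j > 0, α_j = a_j / Z, α'_j = a'_j / Z'. Let v, v' : Fin T → E with v_j = v'_j for all j ≠ j₀, h = Σ_j α_j v_j, h' = Σ_j α'_j v'_j, α'_{j₀} < 1, and c̄ = (1 / (1 − α'_{j₀})) · Σ_{j ≠ j₀} α'_j v_j. If ‖v_{j₀} − v'_{j₀}‖ ≥ ε and α_{j₀} ≤ α'_{j₀}, then ‖h − h'‖ ≥ α_{j₀} · ε − (α'_{j₀} − α_{j₀}) · ‖v'_{j₀} − c̄‖. -/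
/-- lower bound (sufficiency direction) — under Raw Signal Separation,
the pooled representations of two class-distinct sequences remain separated up to a
fluctuation term controlled by the difference of attention masses at `j₀`. -/
theorem pooled_representation_lower_bound
    {E : Type*} [NormedAddCommGroup E] [InnerProductSpace ℝ E]
    (T : ℕ) (hT : 2 ≤ T) (j₀ : Fin T) (a a' : Fin T → ℝ)
    (ha : ∀ j, 0 ≤ a j) (ha' : ∀ j, 0 ≤ a' j)
    (hagree : ∀ j, j ≠ j₀ → a j = a' j)
    (Z Z' : ℝ) (hZdef : Z = ∑ j, a j) (hZ'def : Z' = ∑ j, a' j)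
    (hZ : 0 < Z) (hZ' : 0 < Z')
    (α α' : Fin T → ℝ)
    (hα : ∀ j, α j = a j / Z) (hα' : ∀ j, α' j = a' j / Z')
    (v v' : Fin T → E) (hv : ∀ j, j ≠ j₀ → v j = v' j)
    (h h' : E)
    (hh : h = ∑ j, α j • v j) (hh' : h' = ∑ j, α' j • v' j)
    (hlt : α' j₀ < 1)
    (cbar : E) (hc : cbar = (1 / (1 - α' j₀)) • ∑ j ∈ Finset.univ.erase j₀, α' j • v j)
    (ε : ℝ) (hε : ε ≤ ‖v j₀ - v' j₀‖) (hord : α j₀ ≤ α' j₀) :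
    α j₀ * ε - (α' j₀ - α j₀) * ‖v' j₀ - cbar‖ ≤ ‖h - h'‖ := by
  have hne : (1 - α' j₀) ≠ 0 := by linarith
  set S : ℝ := ∑ j ∈ Finset.univ.erase j₀, a j with hS
  have hZsplit : Z = a j₀ + S := by
    rw [hZdef, ← Finset.add_sum_erase _ a (Finset.mem_univ j₀)]
  have hSagree : S = ∑ j ∈ Finset.univ.erase j₀, a' j := by
    refine Finset.sum_congr rfl fun j hj => hagree j (Finset.ne_of_mem_erase hj)
  have hZ'split : Z' = a' j₀ + S := by
    rw [hZ'def, ← Finset.add_sum_erase _ a' (Finset.mem_univ j₀), hSagree]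
  have h1α : 1 - α j₀ = S / Z := by
    rw [hα]; field_simp; linarith
  have h1α' : 1 - α' j₀ = S / Z' := by
    rw [hα']; field_simp; linarith
  -- cbar relation
  have hcbar' : ∑ j ∈ Finset.univ.erase j₀, α' j • v j = (1 - α' j₀) • cbar := by
    rw [hc, smul_smul]
    rw [mul_one_div, div_self hne, one_smul]
  -- erased sum for α in terms of cbar
  have herase : ∑ j ∈ Finset.univ.erase j₀, α j • v j = (1 - α j₀) • cbar := by
    have h2 : ∑ j ∈ Finset.univ.erase j₀, α j • v j
        = (Z' / Z) • ∑ j ∈ Finset.univ.erase j₀, α' j • v j := by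
      rw [Finset.smul_sum]
      refine Finset.sum_congr rfl fun j hj => ?_
      have hjne : j ≠ j₀ := Finset.ne_of_mem_erase hj
      rw [hα, hα', hagree j hjne, smul_smul]
      congr 1
      field_simp
    rw [h2, hcbar', smul_smul, h1α, h1α']
    congr 1
    field_simp
  -- decompositions of h and h'
  have hhdec : h = α j₀ • v j₀ + (1 - α j₀) • cbar := by
    rw [hh, ← Finset.add_sum_erase _ (fun j => α j • v j) (Finset.mem_univ j₀), herase]
  have hh'dec : h' = α' j₀ • v' j₀ + (1 - α' j₀) • cbar := by
    rw [hh', ← Finset.add_sum_erase _ (fun j => α' j • v' j) (Finset.mem_univ j₀),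
      ← hcbar']
    congr 1
    refine Finset.sum_congr rfl fun j hj => ?_
    rw [hv j (Finset.ne_of_mem_erase hj)]
  have hdiff : h - h' = α j₀ • (v j₀ - v' j₀) - (α' j₀ - α j₀) • (v' j₀ - cbar) := by
    rw [hhdec, hh'dec]; module
  have hαnn : 0 ≤ α j₀ := by
    rw [hα]; exact div_nonneg (ha j₀) hZ.le
  calc α j₀ * ε - (α' j₀ - α j₀) * ‖v' j₀ - cbar‖
      ≤ α j₀ * ‖v j₀ - v' j₀‖ - (α' j₀ - α j₀) * ‖v' j₀ - cbar‖ := by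
        have := mul_le_mul_of_nonneg_left hε hαnn
        linarith
    _ = ‖α j₀ • (v j₀ - v' j₀)‖ - ‖(α' j₀ - α j₀) • (v' j₀ - cbar)‖ := by
        rw [norm_smul, norm_smul, Real.norm_eq_abs, Real.norm_eq_abs,
          abs_of_nonneg hαnn, abs_of_nonneg (by linarith : (0:ℝ) ≤ α' j₀ - α j₀)]
    _ ≤ ‖α j₀ • (v j₀ - v' j₀) - (α' j₀ - α j₀) • (v' j₀ - cbar)‖ :=
        norm_sub_norm_le _ _
    _ = ‖h - h'‖ := by rw [hdiff]
end

section
/- Let E be a real inner product space, u, u' ∈ E, and a, b ≥ 0 real scalars. If (a − b)·(a·‖u‖² − b·‖u'‖²) ≥ 0 and ‖u − u'‖ ≥ ε with ε ≥ 0, then ‖a·u − b·u'‖ ≥ √(a·b) · ε. -/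
/-! The whole point is the identity
`‖a • u - b • u'‖² = a b ‖u - u'‖² + (a - b)(a ‖u‖² - b ‖u'‖²)`, valid for all real `a, b`:
the inner-product terms cancel. Alignment makes the last term nonnegative, and taking
square roots gives `√(a b) ‖u - u'‖ ≤ ‖a • u - b • u'‖`. -/

section

variable {E : Type*} [NormedAddCommGroup E] [InnerProductSpace ℝ E]

theorem norm_smul_sub_smul_sq (u u' : E) (a b : ℝ) :
    ‖a • u - b • u'‖ ^ 2 =
      a * b * ‖u - u'‖ ^ 2 + (a - b) * (a * ‖u‖ ^ 2 - b * ‖u'‖ ^ 2) := by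
  rw [norm_sub_sq_real, norm_sub_sq_real, norm_smul, norm_smul, real_inner_smul_left,
    real_inner_smul_right, mul_pow, mul_pow, Real.norm_eq_abs, Real.norm_eq_abs, sq_abs, sq_abs]
  ring

theorem sqrt_mul_mul_norm_sub_le_norm_smul_sub_smul {u u' : E} {a b : ℝ}
    (halign : 0 ≤ (a - b) * (a * ‖u‖ ^ 2 - b * ‖u'‖ ^ 2)) :
    Real.sqrt (a * b) * ‖u - u'‖ ≤ ‖a • u - b • u'‖ := by
  have hsq : a * b * ‖u - u'‖ ^ 2 ≤ ‖a • u - b • u'‖ ^ 2 := by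
    rw [norm_smul_sub_smul_sq]
    linarith
  calc Real.sqrt (a * b) * ‖u - u'‖ = Real.sqrt (a * b * ‖u - u'‖ ^ 2) := by
        rw [Real.sqrt_mul' _ (sq_nonneg _), Real.sqrt_sq (norm_nonneg _)]
    _ ≤ Real.sqrt (‖a • u - b • u'‖ ^ 2) := Real.sqrt_le_sqrt hsq
    _ = ‖a • u - b • u'‖ := Real.sqrt_sq (norm_nonneg _)

end

theorem aligned_sqrt_lower_bound_general
    {E : Type*} [NormedAddCommGroup E] [InnerProductSpace ℝ E]
    (u u' : E) (a b : ℝ)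
    (halign : 0 ≤ (a - b) * (a * ‖u‖ ^ 2 - b * ‖u'‖ ^ 2))
    (ε : ℝ) (hsep : ε ≤ ‖u - u'‖) :
    Real.sqrt (a * b) * ε ≤ ‖a • u - b • u'‖ :=
  (mul_le_mul_of_nonneg_left hsep (Real.sqrt_nonneg _)).trans
    (sqrt_mul_mul_norm_sub_le_norm_smul_sub_smul halign)

/-- clean geometric-mean lower bound when the orderings of the scalar
pair and of the norm pair are aligned. -/
theorem aligned_sqrt_lower_bound
    {E : Type*} [NormedAddCommGroup E] [InnerProductSpace ℝ E]
    (u u' : E) (a b : ℝ) (ha : 0 ≤ a) (hb : 0 ≤ b)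
    (halign : 0 ≤ (a - b) * (a * ‖u‖ ^ 2 - b * ‖u'‖ ^ 2))
    (ε : ℝ) (hε : 0 ≤ ε) (hsep : ε ≤ ‖u - u'‖) :
    Real.sqrt (a * b) * ε ≤ ‖a • u - b • u'‖ :=
  aligned_sqrt_lower_bound_general u u' a b halign ε hsep
end

section
/- Let E be a real inner product space, u, u' ∈ E, and a, b ∈ [0, 1] real scalars. If ‖u‖ ≤ B, ‖u'‖ ≤ B, and ‖u − u'‖ ≥ ε with ε, B ≥ 0, then ‖a·u − b·u'‖² ≥ a·b·ε² − |a − b| · max(a, b) · B². -/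
/-!
Expanding both squares, `‖a • u - b • u'‖² = a b ‖u - u'‖² + (a - b)(a ‖u‖² - b ‖u'‖²)`.
The first term is at least `a b ε²`; in the second, when `a ≥ b` say, the part `(a - b) a ‖u‖²`
is nonnegative and the remaining `-(a - b) b ‖u'‖²` is at least `-(a - b) a B²`.
-/

lemma norm_smul_sub_smul_sq_eq {E : Type*} [NormedAddCommGroup E] [InnerProductSpace ℝ E]
    (a b : ℝ) (u v : E) :
    ‖a • u - b • v‖ ^ 2 = a * b * ‖u - v‖ ^ 2 + (a - b) * (a * ‖u‖ ^ 2 - b * ‖v‖ ^ 2) := by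
  rw [norm_sub_sq_real, norm_sub_sq_real, real_inner_smul_left, real_inner_smul_right,
    norm_smul, norm_smul, mul_pow, mul_pow, Real.norm_eq_abs, Real.norm_eq_abs, sq_abs, sq_abs]
  ring

lemma neg_abs_sub_mul_max_mul_le {a b x y C : ℝ} (ha : 0 ≤ a) (hb : 0 ≤ b)
    (hx : 0 ≤ x) (hy : 0 ≤ y) (hxC : x ≤ C) (hyC : y ≤ C) :
    -(|a - b| * max a b * C) ≤ (a - b) * (a * x - b * y) := by
  rcases le_total b a with hab | hab
  · rw [abs_of_nonneg (sub_nonneg.2 hab), max_eq_left hab]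
    nlinarith [mul_nonneg (sub_nonneg.2 hab) (mul_nonneg ha hx),
      mul_nonneg (sub_nonneg.2 hab) (mul_nonneg hb (sub_nonneg.2 hyC)),
      mul_nonneg (sub_nonneg.2 hab) (mul_nonneg (sub_nonneg.2 hab) (hy.trans hyC))]
  · rw [abs_of_nonpos (sub_nonpos.2 hab), max_eq_right hab]
    nlinarith [mul_nonneg (sub_nonneg.2 hab) (mul_nonneg hb hy),
      mul_nonneg (sub_nonneg.2 hab) (mul_nonneg ha (sub_nonneg.2 hxC)),
      mul_nonneg (sub_nonneg.2 hab) (mul_nonneg (sub_nonneg.2 hab) (hx.trans hxC))]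

theorem mismatched_squared_lower_bound_general
    {E : Type*} [NormedAddCommGroup E] [InnerProductSpace ℝ E]
    (u u' : E) (a b : ℝ) (ha : a ∈ Set.Icc (0:ℝ) 1) (hb : b ∈ Set.Icc (0:ℝ) 1)
    (B : ℝ) (hu : ‖u‖ ≤ B) (hu' : ‖u'‖ ≤ B)
    (ε : ℝ) (hε : 0 ≤ ε) (hsep : ε ≤ ‖u - u'‖) :
    a * b * ε ^ 2 - |a - b| * max a b * B ^ 2 ≤ ‖a • u - b • u'‖ ^ 2 := by
  have hsep_sq : a * b * ε ^ 2 ≤ a * b * ‖u - u'‖ ^ 2 :=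
    mul_le_mul_of_nonneg_left (pow_le_pow_left₀ hε hsep 2) (mul_nonneg ha.1 hb.1)
  have hmismatch := neg_abs_sub_mul_max_mul_le ha.1 hb.1 (sq_nonneg ‖u‖) (sq_nonneg ‖u'‖)
    (pow_le_pow_left₀ (norm_nonneg u) hu 2) (pow_le_pow_left₀ (norm_nonneg u') hu' 2)
  rw [norm_smul_sub_smul_sq_eq]
  linarith

/-- pessimistic squared lower bound when the orderings may mismatch. -/
theorem mismatched_squared_lower_bound
    {E : Type*} [NormedAddCommGroup E] [InnerProductSpace ℝ E]
    (u u' : E) (a b : ℝ) (ha : a ∈ Set.Icc (0:ℝ) 1) (hb : b ∈ Set.Icc (0:ℝ) 1)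
    (B : ℝ) (hB : 0 ≤ B) (hu : ‖u‖ ≤ B) (hu' : ‖u'‖ ≤ B)
    (ε : ℝ) (hε : 0 ≤ ε) (hsep : ε ≤ ‖u - u'‖) :
    a * b * ε ^ 2 - |a - b| * max a b * B ^ 2 ≤ ‖a • u - b • u'‖ ^ 2 :=
  mismatched_squared_lower_bound_general u u' a b ha hb B hu hu' ε hε hsep
end

section
/- Let E and F be real inner product spaces, T ≥ 2, and let a, a' : Fin T → ℝ be nonnegative score vectors with a_j = a'_j for all j ≠ j₀, Z = Σ_j a_j > 0, Z' = Σ_j a'_j > 0, α_j = a_j / Z, α'_j = a'_j / Z'. Let v, v' : Fin T → E with v_j = v'_j for all j ≠ j₀, h = Σ_j α_j v_j, h' = Σ_j α'_j v'_j, α'_{j₀} < 1, and c̄ = (1 / (1 − α'_{j₀})) · Σ_{j ≠ j₀} α'_j v_j. Suppose Δ > 0 satisfies Δ ≥ ‖v_{j₀} − c̄‖ and Δ ≥ ‖v'_{j₀} − c̄‖, f : E → F is L-Lipschitz with L > 0, and ‖f(h) − f(h')‖ ≥ c for some c > 0. Then α_{j₀} + α'_{j₀} ≥ c / (L · Δ).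 -/
/-- pair-level necessary condition (necessity direction of the
Decoupling Theorem) — if an `L`-Lipschitz classifier separates the two pooled
representations by margin `c`, the total attention mass at the informative
position `j₀` is at least `c / (L · Δ)`. -/
theorem pair_level_necessary_condition
    {E F : Type*} [NormedAddCommGroup E] [InnerProductSpace ℝ E]
    [NormedAddCommGroup F] [InnerProductSpace ℝ F]
    (T : ℕ) (hT : 2 ≤ T) (j₀ : Fin T) (a a' : Fin T → ℝ)
    (ha : ∀ j, 0 ≤ a j) (ha' : ∀ j, 0 ≤ a' j)
    (hagree : ∀ j, j ≠ j₀ → a j = a' j)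
    (Z Z' : ℝ) (hZdef : Z = ∑ j, a j) (hZ'def : Z' = ∑ j, a' j)
    (hZ : 0 < Z) (hZ' : 0 < Z')
    (α α' : Fin T → ℝ)
    (hα : ∀ j, α j = a j / Z) (hα' : ∀ j, α' j = a' j / Z')
    (v v' : Fin T → E) (hv : ∀ j, j ≠ j₀ → v j = v' j)
    (h h' : E)
    (hh : h = ∑ j, α j • v j) (hh' : h' = ∑ j, α' j • v' j)
    (hlt : α' j₀ < 1)
    (cbar : E) (hc : cbar = (1 / (1 - α' j₀)) • ∑ j ∈ Finset.univ.erase j₀, α' j • v j)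
    (Δ : ℝ) (hΔpos : 0 < Δ) (hΔ : ‖v j₀ - cbar‖ ≤ Δ) (hΔ' : ‖v' j₀ - cbar‖ ≤ Δ)
    (f : E → F) (L : ℝ) (hL : 0 < L)
    (hf : ∀ x y : E, ‖f x - f y‖ ≤ L * ‖x - y‖)
    (c : ℝ) (hcpos : 0 < c) (hmargin : c ≤ ‖f h - f h'‖) :
    c / (L * Δ) ≤ α j₀ + α' j₀ := by
  set s := Finset.univ.erase j₀ with hs
  have hmem : j₀ ∈ (Finset.univ : Finset (Fin T)) := Finset.mem_univ _
  have h1pos : 0 < 1 - α' j₀ := by linarith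
  have h1ne : (1 : ℝ) - α' j₀ ≠ 0 := ne_of_gt h1pos
  -- key: sum over s of α' j • v j equals (1 - α' j₀) • cbar
  have hS : ∑ j ∈ s, α' j • v j = (1 - α' j₀) • cbar := by
    rw [hc, smul_smul, mul_one_div, div_self h1ne, one_smul]
  -- ratio identities
  have hr : ∀ j ∈ s, α j = (Z' / Z) * α' j := by
    intro j hj
    have hne : j ≠ j₀ := Finset.ne_of_mem_erase hj
    rw [hα, hα', ← hagree j hne]
    field_simp
  have hsumagree : ∑ j ∈ s, a j = ∑ j ∈ s, a' j :=
    Finset.sum_congr rfl fun j hj => hagree j (Finset.ne_of_mem_erase hj)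
  have hZsplit : a j₀ + ∑ j ∈ s, a j = Z := by
    rw [hZdef]; exact Finset.add_sum_erase _ _ hmem
  have hZ'split : a' j₀ + ∑ j ∈ s, a' j = Z' := by
    rw [hZ'def]; exact Finset.add_sum_erase _ _ hmem
  have h1 : (1 - α j₀) = (Z' / Z) * (1 - α' j₀) := by
    have heq : Z - a j₀ = Z' - a' j₀ := by linarith
    rw [hα, hα']
    field_simp
    linear_combination heq
  -- split h
  have hsplit : h = α j₀ • v j₀ + (1 - α j₀) • cbar := by
    rw [hh, ← Finset.add_sum_erase _ (fun j => α j • v j) hmem]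
    congr 1
    calc ∑ j ∈ s, α j • v j = ∑ j ∈ s, (Z' / Z) • (α' j • v j) := by
          refine Finset.sum_congr rfl fun j hj => ?_
          rw [hr j hj, smul_smul]
      _ = (Z' / Z) • ∑ j ∈ s, α' j • v j := (Finset.smul_sum).symm
      _ = (Z' / Z) • ((1 - α' j₀) • cbar) := by rw [hS]
      _ = (1 - α j₀) • cbar := by rw [smul_smul, ← h1]
  have hsplit' : h' = α' j₀ • v' j₀ + (1 - α' j₀) • cbar := by
    rw [hh', ← Finset.add_sum_erase _ (fun j => α' j • v' j) hmem]
    congr 1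
    rw [← hS]
    exact Finset.sum_congr rfl fun j hj => by
      rw [hv j (Finset.ne_of_mem_erase hj)]
  have hdiff : h - h' = α j₀ • (v j₀ - cbar) - α' j₀ • (v' j₀ - cbar) := by
    rw [hsplit, hsplit']
    module
  have hαnn : 0 ≤ α j₀ := by rw [hα]; exact div_nonneg (ha j₀) hZ.le
  have hα'nn : 0 ≤ α' j₀ := by rw [hα']; exact div_nonneg (ha' j₀) hZ'.le
  have hnorm : ‖h - h'‖ ≤ (α j₀ + α' j₀) * Δ := by
    rw [hdiff]
    calc ‖α j₀ • (v j₀ - cbar) - α' j₀ • (v' j₀ - cbar)‖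
        ≤ ‖α j₀ • (v j₀ - cbar)‖ + ‖α' j₀ • (v' j₀ - cbar)‖ := norm_sub_le _ _
      _ = α j₀ * ‖v j₀ - cbar‖ + α' j₀ * ‖v' j₀ - cbar‖ := by
          rw [norm_smul, norm_smul, Real.norm_of_nonneg hαnn,
            Real.norm_of_nonneg hα'nn]
      _ ≤ (α j₀ + α' j₀) * Δ := by nlinarith
  have hchain : c ≤ L * ((α j₀ + α' j₀) * Δ) :=
    le_trans hmargin (le_trans (hf h h') (by nlinarith))
  rw [div_le_iff₀ (by positivity)]
  nlinarith
end

section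
/- Let T ≥ 1, let α* ∈ ℝ^T be a fixed probability vector, let β > 0, and let ℓ : ℝ → ℝ^T be differentiable with ℓ'_j(t) = −β · (softmax(ℓ(t))_j − α*_j) for every t and j. Define D(t) = D_KL(α* ‖ softmax(ℓ(t))). Then D is differentiable and D'(t) = −β · Σ_j (softmax(ℓ(t))_j − α*_j)² for every t. -/
/-- The softmax map on logits. -/
noncomputable def softmax {T : ℕ} (ℓ : Fin T → ℝ) (i : Fin T) : ℝ :=
  Real.exp (ℓ i) / ∑ k, Real.exp (ℓ k)

/-- dissipation of the structural divergence along the KL gradient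
flow `ℓ' = −β (softmax(ℓ) − α*)`:
`D(t) = D_KL(α* ‖ softmax(ℓ(t)))` satisfies `D'(t) = −β Σ_j (softmax(ℓ(t))_j − α*_j)²`. -/
theorem kl_gradient_flow_dissipation
    (T : ℕ) (hT : 1 ≤ T) (αstar : Fin T → ℝ)
    (hαstar : ∀ j, 0 ≤ αstar j) (hsum : ∑ j, αstar j = 1)
    (β : ℝ) (hβ : 0 < β) (ℓ : ℝ → Fin T → ℝ)
    (hflow : ∀ (t : ℝ) (j : Fin T),
      HasDerivAt (fun s => ℓ s j) (-β * (softmax (ℓ t) j - αstar j)) t)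
    (D : ℝ → ℝ)
    (hD : ∀ t, D t = ∑ i, αstar i * Real.log (αstar i / softmax (ℓ t) i)) :
    ∀ t, HasDerivAt D (-β * ∑ j, (softmax (ℓ t) j - αstar j) ^ 2) t := by
  intro t
  have hne : (Finset.univ : Finset (Fin T)).Nonempty := ⟨⟨0, hT⟩, Finset.mem_univ _⟩
  set Z : ℝ → ℝ := fun s => ∑ k, Real.exp (ℓ s k) with hZdef
  have hZpos : ∀ s, 0 < Z s := fun s =>
    Finset.sum_pos (fun k _ => Real.exp_pos _) hne
  have hspos : ∀ s i, 0 < softmax (ℓ s) i := fun s i =>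
    div_pos (Real.exp_pos _) (hZpos s)
  set v : Fin T → ℝ := fun k => -β * (softmax (ℓ t) k - αstar k) with hvdef
  have hZ' : HasDerivAt Z (∑ k, Real.exp (ℓ t k) * v k) t :=
    HasDerivAt.fun_sum (fun k _ => (hflow t k).exp)
  set E : ℝ := (∑ k, Real.exp (ℓ t k) * v k) / Z t with hEdef
  have hlog : ∀ i, HasDerivAt (fun s => Real.log (softmax (ℓ s) i)) (v i - E) t := by
    intro i
    have heq : (fun s => Real.log (softmax (ℓ s) i)) = fun s => ℓ s i - Real.log (Z s) := by
      funext s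
      rw [softmax, Real.log_div (Real.exp_pos _).ne' (hZpos s).ne', Real.log_exp]
    rw [heq]
    exact (hflow t i).sub (hZ'.log (hZpos t).ne')
  have hterm : ∀ i, HasDerivAt (fun s => αstar i * Real.log (αstar i / softmax (ℓ s) i))
      (-(αstar i) * (v i - E)) t := by
    intro i
    rcases eq_or_lt_of_le (hαstar i) with h0 | h0
    · have heq : (fun s => αstar i * Real.log (αstar i / softmax (ℓ s) i)) = fun _ => (0:ℝ) := by
        funext s; rw [← h0]; ring
      rw [heq, ← h0]
      simpa using hasDerivAt_const t (0:ℝ)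
    · have heq : (fun s => αstar i * Real.log (αstar i / softmax (ℓ s) i))
          = fun s => αstar i * (Real.log (αstar i) - Real.log (softmax (ℓ s) i)) := by
        funext s; rw [Real.log_div h0.ne' (hspos s i).ne']
      rw [heq]
      have h := ((hasDerivAt_const t (Real.log (αstar i))).fun_sub (hlog i)).const_mul (αstar i)
      rw [show -(αstar i) * (v i - E) = αstar i * (0 - (v i - E)) by ring]; exact h
  have hsum' : HasDerivAt (fun s => ∑ i, αstar i * Real.log (αstar i / softmax (ℓ s) i))
      (∑ i, -(αstar i) * (v i - E)) t :=
    HasDerivAt.fun_sum (fun i _ => hterm i)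
  have hDeq : D = fun s => ∑ i, αstar i * Real.log (αstar i / softmax (ℓ s) i) := funext hD
  rw [hDeq]
  convert hsum' using 1
  have hE : E = ∑ k, softmax (ℓ t) k * v k := by
    rw [hEdef, Finset.sum_div]
    refine Finset.sum_congr rfl fun k _ => ?_
    rw [softmax, div_mul_eq_mul_div]
  calc -β * ∑ j, (softmax (ℓ t) j - αstar j) ^ 2
      = ∑ j, (softmax (ℓ t) j - αstar j) * v j := by
        rw [Finset.mul_sum]; exact Finset.sum_congr rfl fun j _ => by rw [hvdef]; ring
    _ = (∑ j, softmax (ℓ t) j * v j) - ∑ j, αstar j * v j := by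
        rw [← Finset.sum_sub_distrib]; exact Finset.sum_congr rfl fun j _ => by ring
    _ = (∑ j, αstar j) * (∑ k, softmax (ℓ t) k * v k) - ∑ j, αstar j * v j := by
        rw [hsum, one_mul]
    _ = ∑ i, -(αstar i) * (v i - E) := by
        rw [hE, Finset.sum_mul, ← Finset.sum_sub_distrib]
        exact Finset.sum_congr rfl fun i _ => by ring
end

section
/- Let E be a real inner product space, let W, Δ ∈ E, let η > 0, λ ∈ (0, 1), and suppose ‖Δ‖ ≤ B. Define W' = (1 − λ)·W − η·Δ and λ_dec = 2λ − λ². Then ‖W'‖² ≤ (1 − λ_dec/2)·‖W‖² + η²·B²·(1 + 2·(1 − λ)²/λ_dec). -/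
/-- norm-contraction of optimizers with decoupled weight decay
(AdamW, Muon, Lion). -/
theorem decoupled_weight_decay_norm_contractive
    {E : Type*} [NormedAddCommGroup E] [InnerProductSpace ℝ E]
    (W Δ : E) (η lam : ℝ) (hη : 0 < η) (hlam : lam ∈ Set.Ioo (0:ℝ) 1)
    (B : ℝ) (hB : ‖Δ‖ ≤ B)
    (W' : E) (hW' : W' = (1 - lam) • W - η • Δ)
    (lamDec : ℝ) (hdec : lamDec = 2 * lam - lam ^ 2) :
    ‖W'‖ ^ 2 ≤ (1 - lamDec / 2) * ‖W‖ ^ 2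
        + η ^ 2 * B ^ 2 * (1 + 2 * (1 - lam) ^ 2 / lamDec) := by
  obtain ⟨h0, h1⟩ := hlam
  have hdpos : 0 < lamDec := by rw [hdec]; nlinarith
  have hexp : ‖W'‖ ^ 2 = (1 - lam) ^ 2 * ‖W‖ ^ 2
      - 2 * ((1 - lam) * η) * inner ℝ W Δ + η ^ 2 * ‖Δ‖ ^ 2 := by
    rw [hW', norm_sub_sq_real, norm_smul, norm_smul, real_inner_smul_left,
      real_inner_smul_right]
    simp only [Real.norm_eq_abs, abs_of_pos hη,
      abs_of_pos (by linarith : (0:ℝ) < 1 - lam)]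
    ring
  have hd0 : (0:ℝ) ≤ ‖Δ‖ := norm_nonneg _
  have hW0 : (0:ℝ) ≤ ‖W‖ := norm_nonneg _
  have hB2 : ‖Δ‖ ^ 2 ≤ B ^ 2 := by nlinarith
  have hip2 : -(‖W‖ * ‖Δ‖) ≤ inner ℝ W Δ :=
    (abs_le.mp (abs_real_inner_le_norm W Δ)).1
  have hstep1 : ‖W'‖ ^ 2 ≤ (1 - lam) ^ 2 * ‖W‖ ^ 2
      + 2 * ((1 - lam) * η) * (‖W‖ * ‖Δ‖) + η ^ 2 * ‖Δ‖ ^ 2 := by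
    rw [hexp]
    nlinarith [mul_pos (by linarith : (0:ℝ) < 1 - lam) hη]
  have hyoung : 2 * ((1 - lam) * η) * (‖W‖ * ‖Δ‖) ≤
      lamDec / 2 * ‖W‖ ^ 2 + 2 * (1 - lam) ^ 2 * η ^ 2 / lamDec * ‖Δ‖ ^ 2 := by
    have hkey : (0:ℝ) ≤ (lamDec * ‖W‖ - 2 * (1 - lam) * η * ‖Δ‖) ^ 2 / (2 * lamDec) := by
      positivity
    have heq : lamDec / 2 * ‖W‖ ^ 2 + 2 * (1 - lam) ^ 2 * η ^ 2 / lamDec * ‖Δ‖ ^ 2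
        - 2 * ((1 - lam) * η) * (‖W‖ * ‖Δ‖)
        = (lamDec * ‖W‖ - 2 * (1 - lam) * η * ‖Δ‖) ^ 2 / (2 * lamDec) := by
      field_simp
      ring
    linarith
  have hsq : (1 - lam) ^ 2 = 1 - lamDec := by rw [hdec]; ring
  have hc : (0:ℝ) ≤ 2 * (1 - lam) ^ 2 / lamDec := by positivity
  have hfrac : 2 * (1 - lam) ^ 2 * η ^ 2 / lamDec * ‖Δ‖ ^ 2
      ≤ η ^ 2 * B ^ 2 * (2 * (1 - lam) ^ 2 / lamDec) := by
    have : 2 * (1 - lam) ^ 2 * η ^ 2 / lamDec * ‖Δ‖ ^ 2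
        = η ^ 2 * ‖Δ‖ ^ 2 * (2 * (1 - lam) ^ 2 / lamDec) := by ring
    rw [this]
    apply mul_le_mul_of_nonneg_right _ hc
    nlinarith
  have hlast : η ^ 2 * ‖Δ‖ ^ 2 ≤ η ^ 2 * B ^ 2 := by nlinarith
  calc ‖W'‖ ^ 2 ≤ (1 - lam) ^ 2 * ‖W‖ ^ 2
      + 2 * ((1 - lam) * η) * (‖W‖ * ‖Δ‖) + η ^ 2 * ‖Δ‖ ^ 2 := hstep1
    _ ≤ (1 - lamDec) * ‖W‖ ^ 2 + (lamDec / 2 * ‖W‖ ^ 2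
        + 2 * (1 - lam) ^ 2 * η ^ 2 / lamDec * ‖Δ‖ ^ 2) + η ^ 2 * ‖Δ‖ ^ 2 := by
      rw [← hsq]; linarith
    _ ≤ (1 - lamDec / 2) * ‖W‖ ^ 2
        + η ^ 2 * B ^ 2 * (1 + 2 * (1 - lam) ^ 2 / lamDec) := by
      nlinarith [hfrac, hlast]
end
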